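/- arXiv:0908.1781 — 2 statements merged into one kernel-verified Lean document; each statement's English description precedes it below -/
import Mathlib

section
/- Let k ∈ ℕ and ν ∈ ℝ. There exist constants c₁, c₂ > 0 (depending only on k, ν) such that for every smooth function f : ℝ³∖{0} → ℝ one has c₁ · Σ_{j=0}^{k} sup_{x≠0} ‖x‖^{ν+j} ‖D^j f(x)‖ ≤ ‖f‖_{k,0,ν} ≤ c₂ · Σ_{j=0}^{k} sup_{x≠0} ‖x‖^{ν+j} ‖D^j f(x)‖, where the inequalities are understood in [0,∞] (in particular one side is finite if and only if the other is). -/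
/-!
With `w = ‖·‖^ν f`, the chart `ℋ_P` is affine with linear part `‖P‖/2`, so
`D^j (w ∘ ℋ_P) = (‖P‖/2)^j D^j w ∘ ℋ_P`. On `ℋ_P(B₁)` one has `‖P‖/2 ≤ ‖y‖`, and `ℋ_x(0) = x`,
so `‖f‖_{k,0,ν}` is equivalent to `Σ_j sup_y ‖y‖^j ‖D^j w(y)‖`. Passing between `w` and
`f = ‖·‖^{-ν} w` costs only a constant by the Leibniz rule, because `‖·‖^μ` is homogeneous of
degree `μ` and therefore `‖D^i ‖·‖^μ (y)‖ ≤ C ‖y‖^{μ-i}`.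
-/

open scoped ENNReal
open Metric Set

noncomputable section

/-- Euclidean 3-space. -/
abbrev E3 : Type := EuclideanSpace ℝ (Fin 3)

/-- The chart `ℋ_P : B₁ → ℝ³ ∖ {0}`, `ℋ_P(x) = P + (‖P‖/2)·x`. -/
def chartH (P x : E3) : E3 := P + (‖P‖ / 2) • x

/-- The Hölder norm `‖g‖_{C^{k,α}(B)}` (valued in `[0,∞]`), with the Hölder
seminorm term omitted when `α = 0`. -/
def holderNormOn {F : Type*} [NormedAddCommGroup F] [NormedSpace ℝ F]
    (k : ℕ) (α : ℝ) (B : Set E3) (g : E3 → F) : ℝ≥0∞ :=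
  (∑ j ∈ Finset.range (k + 1), ⨆ x ∈ B, (‖iteratedFDeriv ℝ j g x‖₊ : ℝ≥0∞)) +
  (if α = 0 then 0 else
    ⨆ x ∈ B, ⨆ y ∈ B, ⨆ _ : x ≠ y,
      ENNReal.ofReal (‖iteratedFDeriv ℝ k g x - iteratedFDeriv ℝ k g y‖ / ‖x - y‖ ^ α))

/-- The weighted Hölder norm `‖T‖_{k,α,ν}` on `ℝ³ ∖ {0}`, defined via the charts
`ℋ_P` on the full unit ball `B₁`. -/
def weightedNorm {F : Type*} [NormedAddCommGroup F] [NormedSpace ℝ F]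
    (k : ℕ) (α ν : ℝ) (T : E3 → F) : ℝ≥0∞ :=
  ⨆ P : {P : E3 // P ≠ 0},
    holderNormOn k α (ball 0 1) (fun x => ‖chartH (↑P) x‖ ^ ν • T (chartH (↑P) x))

/-- The primed weighted Hölder norm `‖T‖'_{k,α,ν}`, defined via the restrictions
of the charts `ℋ_P` to the ball `B_{1/2}`. -/
def weightedNorm' {F : Type*} [NormedAddCommGroup F] [NormedSpace ℝ F]
    (k : ℕ) (α ν : ℝ) (T : E3 → F) : ℝ≥0∞ :=
  ⨆ P : {P : E3 // P ≠ 0},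
    holderNormOn k α (ball 0 (1/2)) (fun x => ‖chartH (↑P) x‖ ^ ν • T (chartH (↑P) x))

/-- Partial derivative `∂_a g` in the direction of the `a`-th coordinate vector. -/
def pd (a : Fin 3) (g : E3 → ℝ) : E3 → ℝ :=
  fun x => fderiv ℝ g x (EuclideanSpace.single a 1)

/-- The Euclidean Laplacian `Δ f = Σ_a ∂_a ∂_a f`. -/
def lap (f : E3 → ℝ) : E3 → ℝ := fun x => ∑ a : Fin 3, pd a (pd a f) x

/-- The Euclidean conformal Killing operator
`(𝒟X)_{ab} = ½(∂_a X_b + ∂_b X_a) − (1/3)δ_{ab} Σ_c ∂_c X_c`. -/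
def cko (X : E3 → E3) (a b : Fin 3) : E3 → ℝ := fun x =>
  (pd a (fun y => X y b) x + pd b (fun y => X y a) x) / 2 -
    (if a = b then (1 : ℝ) else 0) / 3 * ∑ c : Fin 3, pd c (fun y => X y c) x

/-- The Euclidean vector Laplacian `(L X)_a = −Σ_b ∂_b (𝒟X)_{ab}`. -/
def vecLap (X : E3 → E3) : E3 → E3 := fun x =>
  (EuclideanSpace.equiv (Fin 3) ℝ).symm fun a => -∑ b : Fin 3, pd b (cko X a b) x

open scoped Topology

section Calculus

variable {E F : Type*} [NormedAddCommGroup E] [NormedSpace ℝ E]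
  [NormedAddCommGroup F] [NormedSpace ℝ F]

theorem norm_iteratedFDeriv_comp_smul (f : E → F) {c : ℝ} (hc : c ≠ 0) (n : ℕ) (x : E) :
    ‖iteratedFDeriv ℝ n (fun z => f (c • z)) x‖ = |c| ^ n * ‖iteratedFDeriv ℝ n f (c • x)‖ := by
  let e : E ≃L[ℝ] E := ContinuousLinearEquiv.smulLeft (Units.mk0 c hc)
  have hcomp : iteratedFDeriv ℝ n (f ∘ e) x
      = (iteratedFDeriv ℝ n f (e x)).compContinuousLinearMap fun _ => (e : E →L[ℝ] E) := by
    simpa [iteratedFDerivWithin_univ] using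
      e.iteratedFDerivWithin_comp_right f uniqueDiffOn_univ (mem_univ (e x)) n
  have hsmul : (iteratedFDeriv ℝ n f (e x)).compContinuousLinearMap (fun _ => (e : E →L[ℝ] E))
      = c ^ n • iteratedFDeriv ℝ n f (c • x) := by
    ext m
    simp [e, ContinuousMultilinearMap.map_smul_univ]
  rw [show (fun z => f (c • z)) = f ∘ e from rfl, hcomp, hsmul, norm_smul, norm_pow,
    Real.norm_eq_abs]

theorem norm_iteratedFDeriv_comp_add_smul (f : E → F) (a : E) {c : ℝ} (hc : c ≠ 0) (n : ℕ)
    (x : E) :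
    ‖iteratedFDeriv ℝ n (fun z => f (a + c • z)) x‖
      = |c| ^ n * ‖iteratedFDeriv ℝ n f (a + c • x)‖ := by
  rw [norm_iteratedFDeriv_comp_smul (fun y => f (a + y)) hc, iteratedFDeriv_comp_add_left]

theorem norm_iteratedFDeriv_smul_le_of_isOpen {s : Set E} (hs : IsOpen s) {u : E → ℝ}
    {v : E → F} {N : WithTop ℕ∞} (hu : ContDiffOn ℝ N u s) (hv : ContDiffOn ℝ N v s) {x : E}
    (hx : x ∈ s) {n : ℕ} (hn : n ≤ N) :
    ‖iteratedFDeriv ℝ n (fun y => u y • v y) x‖ ≤ ∑ i ∈ Finset.range (n + 1),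
      (n.choose i : ℝ) * ‖iteratedFDeriv ℝ i u x‖ * ‖iteratedFDeriv ℝ (n - i) v x‖ := by
  simpa only [iteratedFDerivWithin_of_isOpen _ hs hx] using
    norm_iteratedFDerivWithin_smul_le hu hv hs.uniqueDiffOn hx hn

end Calculus

section RpowNorm

variable {E : Type*} [NormedAddCommGroup E] [InnerProductSpace ℝ E]

theorem contDiffAt_rpow_norm (μ : ℝ) {n : WithTop ℕ∞} {x : E} (hx : x ≠ 0) :
    ContDiffAt ℝ n (fun y : E => ‖y‖ ^ μ) x :=
  (contDiffAt_norm ℝ hx).rpow_const_of_ne (norm_ne_zero_iff.2 hx)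

theorem contDiffOn_rpow_norm (μ : ℝ) {n : WithTop ℕ∞} :
    ContDiffOn ℝ n (fun y : E => ‖y‖ ^ μ) {0}ᶜ :=
  fun _ hx => (contDiffAt_rpow_norm μ hx).contDiffWithinAt

theorem pow_mul_norm_iteratedFDeriv_rpow_norm_smul (μ : ℝ) (n : ℕ) {c : ℝ} (hc : 0 < c) {u : E}
    (hu : u ≠ 0) :
    c ^ n * ‖iteratedFDeriv ℝ n (fun y : E => ‖y‖ ^ μ) (c • u)‖
      = c ^ μ * ‖iteratedFDeriv ℝ n (fun y : E => ‖y‖ ^ μ) u‖ := by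
  have hhom : (fun z : E => ‖c • z‖ ^ μ) = fun z => c ^ μ • ‖z‖ ^ μ := by
    funext z
    rw [norm_smul, Real.norm_of_nonneg hc.le, smul_eq_mul, Real.mul_rpow hc.le (norm_nonneg z)]
  have hscale := norm_iteratedFDeriv_comp_smul (fun y : E => ‖y‖ ^ μ) hc.ne' n u
  rw [abs_of_pos hc, hhom, iteratedFDeriv_const_smul_apply' (contDiffAt_rpow_norm μ hu),
    norm_smul, Real.norm_of_nonneg (Real.rpow_nonneg hc.le μ)] at hscale
  exact hscale.symm

variable [FiniteDimensional ℝ E]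

/-- Homogeneity reduces the bound to the unit sphere, where it is compactness. -/
theorem exists_norm_iteratedFDeriv_rpow_norm_le (μ : ℝ) (n : ℕ) :
    ∃ C, 0 < C ∧ ∀ x : E, x ≠ 0 →
      ‖iteratedFDeriv ℝ n (fun y : E => ‖y‖ ^ μ) x‖ ≤ C * ‖x‖ ^ (μ - n) := by
  have hcont : ContinuousOn (iteratedFDeriv ℝ n (fun y : E => ‖y‖ ^ μ)) (sphere 0 1) :=
    fun u hu => ((contDiffAt_rpow_norm μ (n := n) (ne_of_mem_sphere hu one_ne_zero)
      ).continuousAt_iteratedFDeriv le_rfl).continuousWithinAt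
  obtain ⟨C, hC⟩ := (isCompact_sphere (0 : E) 1).exists_bound_of_continuousOn hcont
  refine ⟨max C 1, by positivity, fun x hx => ?_⟩
  have hr : 0 < ‖x‖ := norm_pos_iff.2 hx
  have hu : ‖x‖⁻¹ • x ∈ sphere (0 : E) 1 := by simp [norm_smul, hr.ne']
  have key := pow_mul_norm_iteratedFDeriv_rpow_norm_smul μ n hr (ne_of_mem_sphere hu one_ne_zero)
  rw [smul_inv_smul₀ hr.ne'] at key
  rw [Real.rpow_sub hr, Real.rpow_natCast, mul_div_assoc', le_div_iff₀ (pow_pos hr n), mul_comm,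
    key, mul_comm (max C 1)]
  gcongr
  exact (hC _ hu).trans (le_max_left _ _)

theorem exists_norm_iteratedFDeriv_rpow_norm_le_of_le (μ : ℝ) (k : ℕ) :
    ∃ C, 0 < C ∧ ∀ i ≤ k, ∀ x : E, x ≠ 0 →
      ‖iteratedFDeriv ℝ i (fun y : E => ‖y‖ ^ μ) x‖ ≤ C * ‖x‖ ^ (μ - i) := by
  choose C hC0 hC using exists_norm_iteratedFDeriv_rpow_norm_le (E := E) μ
  refine ⟨∑ i ∈ Finset.range (k + 1), C i, Finset.sum_pos (fun i _ => hC0 i) (by simp),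
    fun i hi x hx => (hC i x hx).trans ?_⟩
  gcongr
  exact Finset.single_le_sum (fun i _ => (hC0 i).le) (Finset.mem_range_succ_iff.2 hi)

end RpowNorm

section WeightedSupNorm

variable {E F : Type*} [NormedAddCommGroup E] [NormedSpace ℝ E]
  [NormedAddCommGroup F] [NormedSpace ℝ F]

def weightedSupNorm (k : ℕ) (ν : ℝ) (f : E → F) : ℝ≥0∞ :=
  ∑ j ∈ Finset.range (k + 1), ⨆ x : {x : E // x ≠ 0},
    ENNReal.ofReal (‖(x : E)‖ ^ (ν + (j : ℝ)) * ‖iteratedFDeriv ℝ j f (x : E)‖)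

theorem ofReal_le_weightedSupNorm {k j : ℕ} (hj : j ≤ k) (ν : ℝ) (f : E → F) {x : E}
    (hx : x ≠ 0) :
    ENNReal.ofReal (‖x‖ ^ (ν + (j : ℝ)) * ‖iteratedFDeriv ℝ j f x‖) ≤ weightedSupNorm k ν f :=
  (le_iSup (fun x : {x : E // x ≠ 0} =>
      ENNReal.ofReal (‖(x : E)‖ ^ (ν + (j : ℝ)) * ‖iteratedFDeriv ℝ j f (x : E)‖)) ⟨x, hx⟩).trans
    (Finset.single_le_sum (f := fun j : ℕ => ⨆ x : {x : E // x ≠ 0},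
        ENNReal.ofReal (‖(x : E)‖ ^ (ν + (j : ℝ)) * ‖iteratedFDeriv ℝ j f (x : E)‖))
      (fun _ _ => zero_le) (Finset.mem_range_succ_iff.2 hj))

theorem weightedSupNorm_le {k : ℕ} {ν : ℝ} {f : E → F} {M : ℝ≥0∞}
    (h : ∀ j ≤ k, ∀ x : E, x ≠ 0 →
      ENNReal.ofReal (‖x‖ ^ (ν + (j : ℝ)) * ‖iteratedFDeriv ℝ j f x‖) ≤ M) :
    weightedSupNorm k ν f ≤ (k + 1) * M := by
  calc weightedSupNorm k ν f ≤ ∑ _j ∈ Finset.range (k + 1), M :=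
        Finset.sum_le_sum fun j hj =>
          iSup_le fun x => h j (Finset.mem_range_succ_iff.1 hj) x x.2
    _ = (k + 1) * M := by simp

theorem weightedSupNorm_congr {k : ℕ} {ν : ℝ} {f g : E → F} (h : EqOn f g {0}ᶜ) :
    weightedSupNorm k ν f = weightedSupNorm k ν g := by
  unfold weightedSupNorm
  refine Finset.sum_congr rfl fun j _ => iSup_congr fun x => ?_
  have hfg : f =ᶠ[𝓝 (x : E)] g := Filter.eventuallyEq_of_mem (isOpen_compl_singleton.mem_nhds x.2) h
  rw [(hfg.iteratedFDeriv ℝ j).eq_of_nhds]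

theorem ofReal_mul_sum_choose_mul_le {C : ℝ} (hC : 0 ≤ C) {j : ℕ} {t : ℕ → ℝ}
    (ht : ∀ i, 0 ≤ t i) {M : ℝ≥0∞} (hM : ∀ i ≤ j, ENNReal.ofReal (t i) ≤ M) :
    ENNReal.ofReal (C * ∑ i ∈ Finset.range (j + 1), (j.choose i : ℝ) * t i)
      ≤ ENNReal.ofReal C * (2 ^ j * M) := by
  rw [ENNReal.ofReal_mul hC, ENNReal.ofReal_sum_of_nonneg fun i _ => mul_nonneg (Nat.cast_nonneg _) (ht i)]
  gcongr
  calc ∑ i ∈ Finset.range (j + 1), ENNReal.ofReal ((j.choose i : ℝ) * t i)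
      ≤ ∑ i ∈ Finset.range (j + 1), (j.choose i : ℝ≥0∞) * M :=
        Finset.sum_le_sum fun i hi => by
          rw [ENNReal.ofReal_mul (by positivity), ENNReal.ofReal_natCast]
          gcongr
          exact hM i (Finset.mem_range_succ_iff.1 hi)
    _ = 2 ^ j * M := by
        rw [← Finset.sum_mul]
        congr 1
        exact_mod_cast Nat.sum_range_choose j

theorem rpow_mul_norm_iteratedFDeriv_smul_le {u : E → ℝ} {v : E → F} {N : WithTop ℕ∞}
    (hu : ContDiffOn ℝ N u {0}ᶜ) (hv : ContDiffOn ℝ N v {0}ᶜ) {j : ℕ} (hj : j ≤ N) {μ C : ℝ}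
    (huC : ∀ i ≤ j, ∀ y : E, y ≠ 0 → ‖iteratedFDeriv ℝ i u y‖ ≤ C * ‖y‖ ^ (μ - i))
    (ν : ℝ) {x : E} (hx : x ≠ 0) :
    ‖x‖ ^ (ν + (j : ℝ)) * ‖iteratedFDeriv ℝ j (fun y => u y • v y) x‖
      ≤ C * ∑ i ∈ Finset.range (j + 1), (j.choose i : ℝ) *
        (‖x‖ ^ (ν + μ + ((j - i : ℕ) : ℝ)) * ‖iteratedFDeriv ℝ (j - i) v x‖) := by
  have hr : 0 < ‖x‖ := norm_pos_iff.2 hx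
  have hweight : ∀ i ≤ j, ‖x‖ ^ (ν + (j : ℝ)) * ‖iteratedFDeriv ℝ i u x‖
      ≤ C * ‖x‖ ^ (ν + μ + ((j - i : ℕ) : ℝ)) := fun i hi =>
    calc ‖x‖ ^ (ν + (j : ℝ)) * ‖iteratedFDeriv ℝ i u x‖
        ≤ ‖x‖ ^ (ν + (j : ℝ)) * (C * ‖x‖ ^ (μ - i)) := by gcongr; exact huC i hi x hx
      _ = C * ‖x‖ ^ (ν + μ + ((j - i : ℕ) : ℝ)) := by
        rw [Nat.cast_sub hi, mul_left_comm, ← Real.rpow_add hr]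
        ring_nf
  calc ‖x‖ ^ (ν + (j : ℝ)) * ‖iteratedFDeriv ℝ j (fun y => u y • v y) x‖
      ≤ ‖x‖ ^ (ν + (j : ℝ)) * ∑ i ∈ Finset.range (j + 1),
          (j.choose i : ℝ) * ‖iteratedFDeriv ℝ i u x‖ * ‖iteratedFDeriv ℝ (j - i) v x‖ := by
        gcongr
        exact norm_iteratedFDeriv_smul_le_of_isOpen isOpen_compl_singleton hu hv hx hj
    _ = ∑ i ∈ Finset.range (j + 1), (j.choose i : ℝ) *
          (‖x‖ ^ (ν + (j : ℝ)) * ‖iteratedFDeriv ℝ i u x‖) * ‖iteratedFDeriv ℝ (j - i) v x‖ := by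
        rw [Finset.mul_sum]
        exact Finset.sum_congr rfl fun i _ => by ring
    _ ≤ ∑ i ∈ Finset.range (j + 1), (j.choose i : ℝ) *
          (C * ‖x‖ ^ (ν + μ + ((j - i : ℕ) : ℝ))) * ‖iteratedFDeriv ℝ (j - i) v x‖ := by
        refine Finset.sum_le_sum fun i hi => mul_le_mul_of_nonneg_right
          (mul_le_mul_of_nonneg_left (hweight i (Finset.mem_range_succ_iff.1 hi))
            (Nat.cast_nonneg _)) (norm_nonneg _)
    _ = _ := by
        rw [Finset.mul_sum]
        exact Finset.sum_congr rfl fun i _ => by ring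

theorem weightedSupNorm_smul_le {k : ℕ} {u : E → ℝ} {v : E → F} (hu : ContDiffOn ℝ k u {0}ᶜ)
    (hv : ContDiffOn ℝ k v {0}ᶜ) {μ C : ℝ} (hC : 0 ≤ C)
    (huC : ∀ i ≤ k, ∀ y : E, y ≠ 0 → ‖iteratedFDeriv ℝ i u y‖ ≤ C * ‖y‖ ^ (μ - i)) (ν : ℝ) :
    weightedSupNorm k ν (fun y => u y • v y)
      ≤ ENNReal.ofReal ((k + 1) * 2 ^ k * C) * weightedSupNorm k (ν + μ) v := by
  have hpoint : ∀ j ≤ k, ∀ x : E, x ≠ 0 →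
      ENNReal.ofReal (‖x‖ ^ (ν + (j : ℝ)) * ‖iteratedFDeriv ℝ j (fun y => u y • v y) x‖)
        ≤ ENNReal.ofReal C * (2 ^ k * weightedSupNorm k (ν + μ) v) := fun j hj x hx =>
    calc _ ≤ _ := ENNReal.ofReal_le_ofReal <| rpow_mul_norm_iteratedFDeriv_smul_le hu hv
            (by exact_mod_cast hj) (fun i hi => huC i (hi.trans hj)) ν hx
      _ ≤ ENNReal.ofReal C * (2 ^ j * weightedSupNorm k (ν + μ) v) :=
          ofReal_mul_sum_choose_mul_le hC (fun i => by positivity) fun i hi =>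
            ofReal_le_weightedSupNorm ((Nat.sub_le j i).trans hj) _ v hx
      _ ≤ _ := by gcongr; exact one_le_two
  calc _ ≤ _ := weightedSupNorm_le hpoint
    _ = _ := by
      rw [ENNReal.ofReal_mul (by positivity), ENNReal.ofReal_mul (by positivity),
        ENNReal.ofReal_pow zero_le_two, ENNReal.ofReal_ofNat, ENNReal.ofReal_add (by positivity)
        zero_le_one, ENNReal.ofReal_natCast, ENNReal.ofReal_one]
      ring

end WeightedSupNorm

section Charts

variable {F : Type*} [NormedAddCommGroup F] [NormedSpace ℝ F]

theorem nnnorm_iteratedFDeriv_le_holderNormOn {k j : ℕ} (hj : j ≤ k) (α : ℝ) {B : Set E3}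
    {g : E3 → F} {x : E3} (hx : x ∈ B) :
    (‖iteratedFDeriv ℝ j g x‖₊ : ℝ≥0∞) ≤ holderNormOn k α B g :=
  calc (‖iteratedFDeriv ℝ j g x‖₊ : ℝ≥0∞)
      ≤ ⨆ x ∈ B, (‖iteratedFDeriv ℝ j g x‖₊ : ℝ≥0∞) := le_iSup₂_of_le x hx le_rfl
    _ ≤ ∑ j ∈ Finset.range (k + 1), ⨆ x ∈ B, (‖iteratedFDeriv ℝ j g x‖₊ : ℝ≥0∞) :=
        Finset.single_le_sum (f := fun j => ⨆ x ∈ B, (‖iteratedFDeriv ℝ j g x‖₊ : ℝ≥0∞))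
          (fun _ _ => zero_le) (Finset.mem_range_succ_iff.2 hj)
    _ ≤ holderNormOn k α B g := le_self_add

theorem holderNormOn_le_weightedNorm (k : ℕ) (α ν : ℝ) (T : E3 → F) {P : E3} (hP : P ≠ 0) :
    holderNormOn k α (ball 0 1) (fun x => ‖chartH P x‖ ^ ν • T (chartH P x))
      ≤ weightedNorm k α ν T :=
  le_iSup (fun P : {P : E3 // P ≠ 0} =>
    holderNormOn k α (ball 0 1) (fun x => ‖chartH (↑P) x‖ ^ ν • T (chartH (↑P) x))) ⟨P, hP⟩

theorem chartH_zero (P : E3) : chartH P 0 = P := by simp [chartH]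

theorem half_norm_le_norm_chartH (P : E3) {x : E3} (hx : ‖x‖ ≤ 1) :
    ‖P‖ / 2 ≤ ‖chartH P x‖ := by
  have htri : ‖P‖ ≤ ‖chartH P x‖ + ‖(‖P‖ / 2) • x‖ := by
    simpa [chartH] using norm_sub_le (chartH P x) ((‖P‖ / 2) • x)
  have hsmall : ‖(‖P‖ / 2) • x‖ ≤ ‖P‖ / 2 := by
    rw [norm_smul, Real.norm_of_nonneg (by positivity)]
    exact mul_le_of_le_one_right (by positivity) hx
  linarith

theorem norm_iteratedFDeriv_comp_chartH (g : E3 → F) {P : E3} (hP : P ≠ 0) (n : ℕ) (x : E3) :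
    ‖iteratedFDeriv ℝ n (fun z => g (chartH P z)) x‖
      = (‖P‖ / 2) ^ n * ‖iteratedFDeriv ℝ n g (chartH P x)‖ := by
  have hc : 0 < ‖P‖ / 2 := by positivity
  rw [← abs_of_pos hc]
  exact norm_iteratedFDeriv_comp_add_smul g P hc.ne' n x

theorem weightedNorm_zero_le_weightedSupNorm (k : ℕ) (ν : ℝ) (f : E3 → F) :
    weightedNorm k 0 ν f ≤ weightedSupNorm k 0 (fun y => ‖y‖ ^ ν • f y) := by
  refine iSup_le fun P => ?_
  rw [holderNormOn, if_pos rfl, add_zero]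
  refine Finset.sum_le_sum fun j _ => iSup₂_le fun x hx => ?_
  have hP : (P : E3) ≠ 0 := P.2
  have hy : ‖(P : E3)‖ / 2 ≤ ‖chartH P x‖ :=
    half_norm_le_norm_chartH P (mem_ball_zero_iff.1 hx).le
  have hy0 : chartH P x ≠ 0 := norm_pos_iff.1 (lt_of_lt_of_le (by positivity) hy)
  refine le_iSup_of_le ⟨chartH P x, hy0⟩ ?_
  rw [← enorm_eq_nnnorm, ← ofReal_norm, norm_iteratedFDeriv_comp_chartH (fun y => ‖y‖ ^ ν • f y) hP, zero_add,
    Real.rpow_natCast]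
  gcongr

theorem weightedSupNorm_le_weightedNorm_zero (k : ℕ) (ν : ℝ) (f : E3 → F) :
    weightedSupNorm k 0 (fun y => ‖y‖ ^ ν • f y)
      ≤ ENNReal.ofReal ((k + 1) * 2 ^ k) * weightedNorm k 0 ν f := by
  set w : E3 → F := fun y => ‖y‖ ^ ν • f y
  have hpoint : ∀ j ≤ k, ∀ x : E3, x ≠ 0 →
      ENNReal.ofReal (‖x‖ ^ ((0 : ℝ) + (j : ℝ)) * ‖iteratedFDeriv ℝ j w x‖)
        ≤ 2 ^ k * weightedNorm k 0 ν f := fun j hj x hx => by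
    have hchart := norm_iteratedFDeriv_comp_chartH w hx j 0
    rw [chartH_zero] at hchart
    have hscale : ‖x‖ ^ ((0 : ℝ) + (j : ℝ)) * ‖iteratedFDeriv ℝ j w x‖
        = 2 ^ j * ‖iteratedFDeriv ℝ j (fun z => w (chartH x z)) 0‖ := by
      rw [hchart, zero_add, Real.rpow_natCast, ← mul_assoc, ← mul_pow, mul_div_cancel₀ _ two_ne_zero]
    rw [hscale, ENNReal.ofReal_mul (by positivity), ENNReal.ofReal_pow zero_le_two,
      ENNReal.ofReal_ofNat, ofReal_norm]
    gcongr
    · exact one_le_two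
    · exact (nnnorm_iteratedFDeriv_le_holderNormOn hj 0 (mem_ball_self one_pos)).trans
        (holderNormOn_le_weightedNorm k 0 ν f hx)
  calc _ ≤ _ := weightedSupNorm_le hpoint
    _ = _ := by
      rw [ENNReal.ofReal_mul (by positivity), ENNReal.ofReal_pow zero_le_two, ENNReal.ofReal_ofNat,
        ENNReal.ofReal_add (by positivity) zero_le_one, ENNReal.ofReal_natCast, ENNReal.ofReal_one,
        mul_assoc]

end Charts

/-- the weighted `C^{k,0}` norm is equivalent (in `[0,∞]`) to
`Σ_{j=0}^{k} sup_{x≠0} ‖x‖^{ν+j} ‖D^j f(x)‖`. -/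
theorem weightedNorm_equiv_sup_iteratedFDeriv (k : ℕ) (ν : ℝ) :
    ∃ c₁ c₂ : ℝ, 0 < c₁ ∧ 0 < c₂ ∧ ∀ f : E3 → ℝ, ContDiffOn ℝ (⊤ : ℕ∞) f {(0 : E3)}ᶜ →
      ENNReal.ofReal c₁ *
          (∑ j ∈ Finset.range (k + 1), ⨆ x : {x : E3 // x ≠ 0},
            ENNReal.ofReal (‖(x : E3)‖ ^ (ν + (j : ℝ)) * ‖iteratedFDeriv ℝ j f (x : E3)‖))
        ≤ weightedNorm k 0 ν f ∧
      weightedNorm k 0 ν f ≤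
        ENNReal.ofReal c₂ *
          (∑ j ∈ Finset.range (k + 1), ⨆ x : {x : E3 // x ≠ 0},
            ENNReal.ofReal (‖(x : E3)‖ ^ (ν + (j : ℝ)) * ‖iteratedFDeriv ℝ j f (x : E3)‖)) := by
  obtain ⟨Cp, hCp, hboundp⟩ := exists_norm_iteratedFDeriv_rpow_norm_le_of_le (E := E3) ν k
  obtain ⟨Cm, hCm, hboundm⟩ := exists_norm_iteratedFDeriv_rpow_norm_le_of_le (E := E3) (-ν) k
  set K : ℝ := (k + 1) * 2 ^ k * Cm * ((k + 1) * 2 ^ k)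
  refine ⟨K⁻¹, (k + 1) * 2 ^ k * Cp, by positivity, by positivity, fun f hf => ?_⟩
  have hfk : ContDiffOn ℝ k f {0}ᶜ := hf.of_le (by exact_mod_cast le_top)
  set w : E3 → ℝ := fun y => ‖y‖ ^ ν • f y
  have hw : ContDiffOn ℝ k w {0}ᶜ := (contDiffOn_rpow_norm ν).smul hfk
  have hfw : EqOn f (fun y => ‖y‖ ^ (-ν) • w y) {0}ᶜ := fun y hy => by
    simp only [w, smul_smul, ← Real.rpow_add (norm_pos_iff.2 hy), neg_add_cancel, Real.rpow_zero,
      one_smul]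
  change ENNReal.ofReal K⁻¹ * weightedSupNorm k ν f ≤ _ ∧ _ ≤ _ * weightedSupNorm k ν f
  constructor
  · rw [ENNReal.ofReal_inv_of_pos (by positivity),
      ENNReal.inv_mul_le_iff (by positivity) ENNReal.ofReal_ne_top]
    calc weightedSupNorm k ν f = weightedSupNorm k ν (fun y => ‖y‖ ^ (-ν) • w y) :=
          weightedSupNorm_congr hfw
      _ ≤ ENNReal.ofReal ((k + 1) * 2 ^ k * Cm) * weightedSupNorm k 0 w := by
          simpa only [add_neg_cancel] using
            weightedSupNorm_smul_le (contDiffOn_rpow_norm (-ν)) hw hCm.le hboundm ν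
      _ ≤ ENNReal.ofReal ((k + 1) * 2 ^ k * Cm) *
            (ENNReal.ofReal ((k + 1) * 2 ^ k) * weightedNorm k 0 ν f) := by
          gcongr
          exact weightedSupNorm_le_weightedNorm_zero k ν f
      _ = ENNReal.ofReal K * weightedNorm k 0 ν f := by
          rw [← mul_assoc, ← ENNReal.ofReal_mul (by positivity)]
  · calc weightedNorm k 0 ν f ≤ weightedSupNorm k 0 w := weightedNorm_zero_le_weightedSupNorm k ν f
      _ ≤ _ := by
          simpa only [zero_add] using
            weightedSupNorm_smul_le (contDiffOn_rpow_norm ν) hfk hCp.le hboundp 0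
end
end

section
/- Let ν ∈ (3/2, 2) and c ≥ 0. Suppose ψ : ℝ³∖{0} → ℝ is a smooth function which is harmonic on ℝ³∖{0} (i.e. Δψ(x) = Σ_a ∂_a∂_a ψ(x) = 0 for all x ≠ 0), and suppose that for every x ≠ 0 one has |ψ(x)| ≤ c‖x‖^{1−ν} and ‖∇ψ(x)‖ ≤ c‖x‖^{−ν}. Then ψ = 0 identically on ℝ³∖{0}. -/
open Metric Set

noncomputable section

/-! For `0 < r ≤ ‖x‖ ≤ R`, put `A = c r^(1-ν)`. The comparison function
`ψ - A r ‖y‖⁻¹ + ε ‖y‖²` has Laplacian `6ε > 0` on the shell `r ≤ ‖y‖ ≤ R`, so it attains its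
maximum on one of the two boundary spheres, where the growth bound on `ψ` controls it. Letting
`ε → 0` gives `|ψ x| ≤ c r^(2-ν) / ‖x‖ + c R^(1-ν)`; then `r → 0` (as `ν < 2`) and `R → ∞`
(as `ν > 1`) give `ψ x = 0`. -/

open Filter Topology InnerProductSpace Laplacian

theorem IsLocalMax.deriv_deriv_nonpos {f : ℝ → ℝ} {a : ℝ} (hmax : IsLocalMax f a)
    (hf : ContinuousAt f a) : deriv (deriv f) a ≤ 0 := by
  by_contra! hpos
  -- a positive second derivative makes `a` a local minimum too, so `f` is locally constant
  have hmin := isLocalMin_of_deriv_deriv_pos hpos hmax.deriv_eq_zero hf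
  have hconst : f =ᶠ[𝓝 a] fun _ => f a := by
    filter_upwards [hmax, hmin] with x hle hge using le_antisymm hle hge
  have hderiv : deriv f =ᶠ[𝓝 a] fun _ => 0 := by
    filter_upwards [hconst.eventuallyEq_nhds] with x hx
    rw [hx.deriv_eq, deriv_const]
  rw [hderiv.deriv_eq, deriv_const] at hpos
  exact hpos.false

theorem ContDiffAt.differentiableAt_fderiv {𝕜 E F : Type*} [NontriviallyNormedField 𝕜]
    [NormedAddCommGroup E] [NormedSpace 𝕜 E] [NormedAddCommGroup F] [NormedSpace 𝕜 F]
    {f : E → F} {x : E} (hf : ContDiffAt 𝕜 2 f x) : DifferentiableAt 𝕜 (fderiv 𝕜 f) x :=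
  (hf.fderiv_right (m := 1) (by norm_num)).differentiableAt (by norm_num)

section Laplacian

variable {f g : E3 → ℝ} {x y : E3}

lemma differentiableAt_pd (a : Fin 3) (hf : ContDiffAt ℝ 2 f x) :
    DifferentiableAt ℝ (pd a f) x :=
  hf.differentiableAt_fderiv.clm_apply (differentiableAt_const _)

lemma deriv_deriv_comp_line (a : Fin 3) (hf : ContDiffAt ℝ 2 f y) :
    deriv (deriv fun t : ℝ => f (y + t • EuclideanSpace.single a 1)) 0 = pd a (pd a f) y := by
  set v : E3 := EuclideanSpace.single a 1
  have hline (t : ℝ) : HasDerivAt (fun t : ℝ => y + t • v) v t := by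
    simpa using ((hasDerivAt_id t).smul_const v).const_add y
  have hcont : Tendsto (fun t : ℝ => y + t • v) (𝓝 0) (𝓝 y) := by
    simpa using (hline 0).continuousAt.tendsto
  have hderiv : deriv (fun t : ℝ => f (y + t • v)) =ᶠ[𝓝 0] fun t => pd a f (y + t • v) := by
    filter_upwards [hcont.eventually (hf.eventually (by simp))] with t ht
    exact ((ht.differentiableAt (by norm_num)).hasFDerivAt.comp_hasDerivAt t (hline t)).deriv
  have hpd : HasFDerivAt (pd a f) (fderiv ℝ (pd a f) y) (y + (0 : ℝ) • v) := by
    simpa using (differentiableAt_pd a hf).hasFDerivAt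
  exact hderiv.deriv_eq.trans (hpd.comp_hasDerivAt (f := fun t : ℝ => y + t • v) 0 (hline 0)).deriv

theorem IsLocalMax.lap_nonpos (hmax : IsLocalMax f y) (hf : ContDiffAt ℝ 2 f y) :
    lap f y ≤ 0 := by
  refine Finset.sum_nonpos fun a _ => ?_
  rw [← deriv_deriv_comp_line a hf]
  have hline : Continuous fun t : ℝ => y + t • EuclideanSpace.single a (1 : ℝ) := by fun_prop
  have hy : y + (0 : ℝ) • EuclideanSpace.single a 1 = y := by simp
  rw [← hy] at hmax hf
  exact (hmax.comp_continuous (g := fun t : ℝ => y + t • _) hline.continuousAt).deriv_deriv_nonpos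
    (hf.continuousAt.comp (g := f) (f := fun t : ℝ => y + t • _) hline.continuousAt)

lemma lap_eq_laplacian (hf : ContDiffAt ℝ 2 f x) : lap f x = Δ f x := by
  rw [laplacian_eq_iteratedFDeriv_orthonormalBasis f (EuclideanSpace.basisFun (Fin 3) ℝ)]
  refine Finset.sum_congr rfl fun a _ => ?_
  have hpd : pd a f = fun y => fderiv ℝ f y (EuclideanSpace.single a 1) := rfl
  rw [iteratedFDeriv_two_apply, pd, hpd,
    fderiv_clm_apply hf.differentiableAt_fderiv (differentiableAt_const _)]
  simp

lemma lap_add (hf : ContDiffAt ℝ 2 f x) (hg : ContDiffAt ℝ 2 g x) :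
    lap (fun y => f y + g y) x = lap f x + lap g x := by
  rw [lap_eq_laplacian hf, lap_eq_laplacian hg, lap_eq_laplacian (hf.add hg)]
  exact hf.laplacian_add hg

lemma lap_const_mul (s : ℝ) (hf : ContDiffAt ℝ 2 f x) :
    lap (fun y => s * f y) x = s * lap f x := by
  rw [lap_eq_laplacian hf, lap_eq_laplacian (contDiffAt_const.mul hf)]
  exact laplacian_smul s hf

end Laplacian

lemma pd_comp_normSq {g : ℝ → ℝ} {d : ℝ} {y : E3} (a : Fin 3) (hg : HasDerivAt g d (‖y‖ ^ 2)) :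
    pd a (fun z => g (‖z‖ ^ 2)) y = 2 * d * y a := by
  have hcomp : HasFDerivAt (fun z : E3 => g (‖z‖ ^ 2)) _ y :=
    hg.comp_hasFDerivAt y (hasStrictFDerivAt_norm_sq y).hasFDerivAt
  rw [pd, hcomp.fderiv]
  simp [EuclideanSpace.inner_single_right]
  ring

lemma pd_pd_comp_normSq {g g' : ℝ → ℝ} {L : ℝ} {x : E3} (a : Fin 3)
    (hg : ∀ᶠ q in 𝓝 (‖x‖ ^ 2), HasDerivAt g (g' q) q) (hg' : HasDerivAt g' L (‖x‖ ^ 2)) :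
    pd a (pd a fun z => g (‖z‖ ^ 2)) x = 2 * g' (‖x‖ ^ 2) + 4 * L * x a ^ 2 := by
  have hnormSq : Tendsto (fun z : E3 => ‖z‖ ^ 2) (𝓝 x) (𝓝 (‖x‖ ^ 2)) :=
    (continuous_norm.pow 2).tendsto x
  have hpd : pd a (fun z => g (‖z‖ ^ 2)) =ᶠ[𝓝 x] fun z => 2 * g' (‖z‖ ^ 2) * z a := by
    filter_upwards [hnormSq.eventually hg] with z hz using pd_comp_normSq a hz
  have hprod : HasFDerivAt (fun z : E3 => 2 * g' (‖z‖ ^ 2) * z a) _ x :=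
    ((hg'.comp_hasFDerivAt x (hasStrictFDerivAt_norm_sq x).hasFDerivAt).const_mul 2).mul
      (EuclideanSpace.proj a : E3 →L[ℝ] ℝ).hasFDerivAt
  rw [pd, hpd.fderiv_eq, hprod.fderiv]
  simp [EuclideanSpace.inner_single_right]
  ring

lemma lap_comp_normSq {g g' : ℝ → ℝ} {L : ℝ} {x : E3}
    (hg : ∀ᶠ q in 𝓝 (‖x‖ ^ 2), HasDerivAt g (g' q) q) (hg' : HasDerivAt g' L (‖x‖ ^ 2)) :
    lap (fun z => g (‖z‖ ^ 2)) x = 6 * g' (‖x‖ ^ 2) + 4 * ‖x‖ ^ 2 * L := by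
  simp only [lap, pd_pd_comp_normSq _ hg hg']
  simp only [EuclideanSpace.norm_sq_eq, Fin.sum_univ_three, Real.norm_eq_abs, sq_abs]
  ring

lemma lap_normSq (x : E3) : lap (fun z => ‖z‖ ^ 2) x = 6 := by
  simpa using lap_comp_normSq (g := id) (g' := fun _ => 1) (x := x)
    (.of_forall fun q => hasDerivAt_id q) (hasDerivAt_const _ _)

lemma lap_inv_norm {x : E3} (hx : x ≠ 0) : lap (fun z => ‖z‖⁻¹) x = 0 := by
  set p : ℝ := -1 / 2
  have hrpow : (fun z : E3 => ‖z‖⁻¹) = fun z => (‖z‖ ^ 2) ^ p := by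
    funext z
    rw [← Real.rpow_natCast, ← Real.rpow_mul (norm_nonneg z)]
    norm_num [p, Real.rpow_neg_one]
  have hq : 0 < ‖x‖ ^ 2 := by positivity
  have hg : ∀ᶠ q in 𝓝 (‖x‖ ^ 2), HasDerivAt (fun q => q ^ p) (p * q ^ (p - 1)) q := by
    filter_upwards [eventually_ne_nhds hq.ne'] with q hq0
    exact Real.hasDerivAt_rpow_const (Or.inl hq0)
  have hg' := (Real.hasDerivAt_rpow_const (p := p - 1) (Or.inl hq.ne')).const_mul p
  rw [hrpow, lap_comp_normSq hg hg', Real.rpow_sub_one hq.ne' (p - 1)]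
  field_simp
  norm_num [p]

theorem exists_mem_frontier_isMaxOn_of_lap_pos {K : Set E3} {w : E3 → ℝ} (hK : IsCompact K)
    (hne : K.Nonempty) (hwK : ContinuousOn w K) (hw : ∀ y ∈ interior K, ContDiffAt ℝ 2 w y)
    (hlap : ∀ y ∈ interior K, 0 < lap w y) : ∃ y ∈ frontier K, IsMaxOn w K y := by
  obtain ⟨y, hyK, hmax⟩ := hK.exists_isMaxOn hne hwK
  refine ⟨y, ⟨subset_closure hyK, fun hint => ?_⟩, hmax⟩
  exact (hlap y hint).not_ge
    ((hmax.isLocalMax (mem_interior_iff_mem_nhds.1 hint)).lap_nonpos (hw y hint))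

theorem harmonic_le_of_le_on_spheres {φ : E3 → ℝ} {r R A B : ℝ} (hr : 0 < r) (hA : 0 ≤ A)
    (hB : 0 ≤ B)
    (hφ : ∀ y : E3, ‖y‖ ∈ Icc r R → ContDiffAt ℝ 2 φ y)
    (hharm : ∀ y : E3, ‖y‖ ∈ Icc r R → lap φ y = 0)
    (hinner : ∀ y : E3, ‖y‖ = r → φ y ≤ A) (houter : ∀ y : E3, ‖y‖ = R → φ y ≤ B)
    {x : E3} (hx : ‖x‖ ∈ Icc r R) : φ x ≤ A * r / ‖x‖ + B := by
  set K : Set E3 := norm ⁻¹' Icc r R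
  have hrR : r ≤ R := hx.1.trans hx.2
  have hR : 0 < R := hr.trans_le hrR
  have hK : IsCompact K := (isCompact_closedBall 0 R).of_isClosed_subset
    (isClosed_Icc.preimage continuous_norm) fun y hy => mem_closedBall_zero_iff.2 hy.2
  have hK0 (y : E3) (hy : y ∈ K) : y ≠ 0 := norm_pos_iff.1 (hr.trans_le hy.1)
  apply le_of_forall_pos_le_add
  intro η hη
  set ε := η / R ^ 2
  have hε : 0 < ε := by positivity
  set w : E3 → ℝ := fun y => φ y + -(A * r) * ‖y‖⁻¹ + ε * ‖y‖ ^ 2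
  have hinv (y : E3) (hy : y ∈ K) : ContDiffAt ℝ 2 (fun y : E3 => ‖y‖⁻¹) y :=
    (contDiffAt_norm ℝ (hK0 y hy)).inv (norm_ne_zero_iff.2 (hK0 y hy))
  have hsq (y : E3) : ContDiffAt ℝ 2 (fun y : E3 => ‖y‖ ^ 2) y := (contDiff_norm_sq ℝ).contDiffAt
  have hwC2 (y : E3) (hy : y ∈ K) : ContDiffAt ℝ 2 w y :=
    ((hφ y hy).add (contDiffAt_const.mul (hinv y hy))).add (contDiffAt_const.mul (hsq y))
  have hlapw (y : E3) (hy : y ∈ K) : lap w y = 6 * ε := by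
    rw [lap_add ((hφ y hy).add (contDiffAt_const.mul (hinv y hy))) (contDiffAt_const.mul (hsq y)),
      lap_add (hφ y hy) (contDiffAt_const.mul (hinv y hy)), lap_const_mul _ (hinv y hy),
      lap_const_mul _ (hsq y), hharm y hy, lap_inv_norm (hK0 y hy), lap_normSq]
    ring
  obtain ⟨y, hyfr, hmax⟩ := exists_mem_frontier_isMaxOn_of_lap_pos hK ⟨x, hx⟩
    (fun y hy => (hwC2 y hy).continuousAt.continuousWithinAt)
    (fun y hy => hwC2 y (interior_subset hy))
    (fun y hy => by rw [hlapw y (interior_subset hy)]; positivity)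
  have hy : ‖y‖ = r ∨ ‖y‖ = R := by
    simpa [frontier_Icc hrR] using continuous_norm.frontier_preimage_subset _ hyfr
  have hεR : ε * R ^ 2 = η := div_mul_cancel₀ η (by positivity)
  have hwy : φ y + -(A * r) * ‖y‖⁻¹ + ε * ‖y‖ ^ 2 ≤ B + η := by
    rcases hy with hy | hy
    · have hsq_le : ε * r ^ 2 ≤ ε * R ^ 2 := by gcongr
      rw [hy, neg_mul, mul_inv_cancel_right₀ hr.ne']
      linarith [hinner y hy]
    · have : 0 ≤ A * r * R⁻¹ := by positivity
      rw [hy]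
      linarith [houter y hy]
  have hwx : w x ≤ w y := hmax hx
  have : 0 ≤ ε * ‖x‖ ^ 2 := by positivity
  rw [div_eq_mul_inv]
  linarith

lemma abs_le_of_harmonic_of_abs_le_rpow {ψ : E3 → ℝ} {c ν r R : ℝ} (hc : 0 ≤ c)
    (hψ : ∀ y : E3, y ≠ 0 → ContDiffAt ℝ 2 ψ y) (hharm : ∀ y : E3, y ≠ 0 → lap ψ y = 0)
    (hb : ∀ y : E3, y ≠ 0 → |ψ y| ≤ c * ‖y‖ ^ (1 - ν)) (hr : 0 < r) {x : E3}
    (hx : ‖x‖ ∈ Icc r R) : |ψ x| ≤ c * r ^ (2 - ν) / ‖x‖ + c * R ^ (1 - ν) := by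
  have hne (y : E3) (hy : ‖y‖ ∈ Icc r R) : y ≠ 0 :=
    norm_pos_iff.1 (hr.trans_le hy.1)
  have hA : c * r ^ (1 - ν) * r = c * r ^ (2 - ν) := by
    rw [mul_assoc, ← Real.rpow_add_one hr.ne']
    ring_nf
  have hside (φ : E3 → ℝ) (hφ : ∀ y : E3, y ≠ 0 → ContDiffAt ℝ 2 φ y)
      (hharmφ : ∀ y : E3, y ≠ 0 → lap φ y = 0) (hbφ : ∀ y : E3, y ≠ 0 → φ y ≤ c * ‖y‖ ^ (1 - ν)) :
      φ x ≤ c * r ^ (2 - ν) / ‖x‖ + c * R ^ (1 - ν) := by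
    rw [← hA]
    have hR : 0 ≤ R := hr.le.trans (hx.1.trans hx.2)
    refine harmonic_le_of_le_on_spheres hr (by positivity) (by positivity)
      (fun y hy => hφ y (hne y hy)) (fun y hy => hharmφ y (hne y hy)) (fun y hy => ?_)
      (fun y hy => ?_) hx
    · simpa [hy] using hbφ y (norm_pos_iff.1 (hy ▸ hr))
    · simpa [hy] using hbφ y (norm_pos_iff.1 (hy ▸ hr.trans_le (hx.1.trans hx.2)))
  refine abs_le.2 ⟨neg_le.1 ?_, hside ψ hψ hharm fun y hy => (le_abs_self _).trans (hb y hy)⟩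
  refine hside (fun y => -ψ y) (fun y hy => (hψ y hy).neg) (fun y hy => ?_)
    fun y hy => (neg_le_abs _).trans (hb y hy)
  simpa [hharm y hy] using lap_const_mul (-1) (hψ y hy)

theorem punctured_harmonic_weighted_eq_zero_general (ν c : ℝ) (hν : ν ∈ Set.Ioo (3 / 2 : ℝ) 2)
    (hc : 0 ≤ c) (ψ : E3 → ℝ) (hψ : ContDiffOn ℝ (⊤ : ℕ∞) ψ {(0 : E3)}ᶜ)
    (hharm : ∀ x : E3, x ≠ 0 → lap ψ x = 0)
    (hb1 : ∀ x : E3, x ≠ 0 → |ψ x| ≤ c * ‖x‖ ^ (1 - ν)) :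
    ∀ x : E3, x ≠ 0 → ψ x = 0 := by
  intro x hx
  have hψ2 (y : E3) (hy : y ≠ 0) : ContDiffAt ℝ 2 ψ y :=
    (hψ.contDiffAt (isOpen_compl_singleton.mem_nhds hy)).of_le (WithTop.coe_le_coe.2 le_top)
  have houter (R : ℝ) (hR : ‖x‖ ≤ R) : |ψ x| ≤ c * R ^ (1 - ν) := by
    have hinner : Tendsto (fun r : ℝ => c * r ^ (2 - ν) / ‖x‖ + c * R ^ (1 - ν)) (𝓝[>] 0)
        (𝓝 (c * R ^ (1 - ν))) := by
      have hrpow : Tendsto (fun r : ℝ => r ^ (2 - ν)) (𝓝[>] 0) (𝓝 0) := by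
        simpa [Real.zero_rpow (by linarith [hν.2] : 2 - ν ≠ 0)] using
          (Real.continuousAt_rpow_const 0 (2 - ν) (Or.inr (by linarith [hν.2]))).tendsto.mono_left
            nhdsWithin_le_nhds
      simpa using ((hrpow.const_mul c).div_const ‖x‖).add_const (c * R ^ (1 - ν))
    refine ge_of_tendsto hinner ?_
    filter_upwards [Ioo_mem_nhdsGT (norm_pos_iff.2 hx)] with r hr
    exact abs_le_of_harmonic_of_abs_le_rpow hc hψ2 hharm hb1 hr.1 ⟨hr.2.le, hR⟩
  have hdecay : Tendsto (fun R : ℝ => c * R ^ (1 - ν)) atTop (𝓝 0) := by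
    simpa using (tendsto_rpow_neg_atTop (by linarith [hν.1] : 0 < ν - 1)).const_mul c
  exact abs_nonpos_iff.1 (ge_of_tendsto hdecay ((eventually_ge_atTop ‖x‖).mono houter))

/-- a function harmonic on `ℝ³ ∖ {0}` satisfying
`|ψ(x)| ≤ c‖x‖^{1−ν}` and `‖∇ψ(x)‖ ≤ c‖x‖^{−ν}` with `ν ∈ (3/2, 2)` vanishes
identically. -/
theorem punctured_harmonic_weighted_eq_zero (ν c : ℝ) (hν : ν ∈ Set.Ioo (3 / 2 : ℝ) 2)
    (hc : 0 ≤ c) (ψ : E3 → ℝ) (hψ : ContDiffOn ℝ (⊤ : ℕ∞) ψ {(0 : E3)}ᶜ)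
    (hharm : ∀ x : E3, x ≠ 0 → lap ψ x = 0)
    (hb1 : ∀ x : E3, x ≠ 0 → |ψ x| ≤ c * ‖x‖ ^ (1 - ν))
    (hb2 : ∀ x : E3, x ≠ 0 → ‖gradient ψ x‖ ≤ c * ‖x‖ ^ (-ν)) :
    ∀ x : E3, x ≠ 0 → ψ x = 0 :=
  punctured_harmonic_weighted_eq_zero_general ν c hν hc ψ hψ hharm hb1
end
end
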